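/- Let ν be a measure on the boundary of the dyadic tree T of depth N, let g = 𝕀*ν, and let x ≥ |ν|. Then for every β ∈ T with V^ν(β) ≥ x one has 𝕀(1_{{V^ν ≤ x}}·g)(β) ≥ x/2, where 1_{{V^ν ≤ x}} is the indicator of the set {α ∈ T : V^ν(α) ≤ x}. -/
import Mathlib


open Finset

/-- The set of binary strings of length at most `N` (vertices of the dyadic tree of depth `N`).
The order on the tree is: `α ≤ β` iff `β` is a prefix of `α` (`β <+: α`); the root is `[]`. -/
def strings : ℕ → Finset (List Bool)
  | 0 => {([] : List Bool)}
  | N + 1 =>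
      {([] : List Bool)} ∪ (strings N).image (List.cons true) ∪ (strings N).image (List.cons false)

/-- `𝕀 f (α) = ∑_{α' ≥ α} f α'`, i.e. the sum of `f` over the prefixes of `α`. -/
noncomputable def treeI (N : ℕ) (f : List Bool → ℝ) (α : List Bool) : ℝ :=
  ∑ β ∈ (strings N).filter (fun β => β <+: α), f β

/-- `𝕀* f (α) = ∑_{α' ≤ α} f α'`, i.e. the sum of `f` over the strings extending `α`. -/
noncomputable def treeIstar (N : ℕ) (f : List Bool → ℝ) (α : List Bool) : ℝ :=
  ∑ β ∈ (strings N).filter (fun β => α <+: β), f β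

/-- The potential `V^μ = 𝕀 (𝕀* μ)`. -/
noncomputable def treeV (N : ℕ) (μ : List Bool → ℝ) : List Bool → ℝ :=
  treeI N (treeIstar N μ)

/-- The total mass `|μ|`. -/
noncomputable def treeMass (N : ℕ) (μ : List Bool → ℝ) : ℝ :=
  ∑ α ∈ strings N, μ α

/-- A measure on the boundary `∂T` of the dyadic tree of depth `N`: a nonnegative function
vanishing off the strings of length exactly `N`. -/
def IsMeasureOnBoundary (N : ℕ) (μ : List Bool → ℝ) : Prop :=
  (∀ α, 0 ≤ μ α) ∧ ∀ α, μ α ≠ 0 → α.length = N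

lemma mem_strings (N : ℕ) (α : List Bool) : α ∈ strings N ↔ α.length ≤ N := by
  induction N generalizing α with
  | zero =>
    simp [strings, Nat.le_zero, List.length_eq_zero_iff]
  | succ N ih =>
    cases α with
    | nil => simp [strings]
    | cons b t =>
      cases b <;> simp [strings, ih, Nat.succ_le_succ_iff]

lemma prefix_mem_strings {N : ℕ} {α β : List Bool} (hα : α ∈ strings N) (h : β <+: α) :
    β ∈ strings N := by
  rw [mem_strings] at *
  exact h.length_le.trans hα

lemma treeIstar_nonneg {N : ℕ} {ν : List Bool → ℝ} (hν : ∀ α, 0 ≤ ν α) (α : List Bool) :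
    0 ≤ treeIstar N ν α :=
  Finset.sum_nonneg fun _ _ => hν _

lemma prefix_concat_iff {γ δ : List Bool} {b : Bool} :
    δ <+: γ ++ [b] ↔ δ = γ ++ [b] ∨ δ <+: γ := by
  constructor
  · intro h
    rcases eq_or_ne δ (γ ++ [b]) with h' | h'
    · exact Or.inl h'
    · refine Or.inr (List.prefix_of_prefix_length_le h (List.prefix_append _ _) ?_)
      have hlt : δ.length < (γ ++ [b]).length :=
        lt_of_le_of_ne h.length_le (fun he => h' (h.eq_of_length he))
      simpa [Nat.lt_succ_iff] using hlt
  · rintro (rfl | h)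
    · exact List.prefix_rfl
    · exact h.trans (List.prefix_append _ _)

lemma filter_prefix_concat {N : ℕ} {γ : List Bool} {b : Bool} (h : γ ++ [b] ∈ strings N) :
    (strings N).filter (fun δ => δ <+: γ ++ [b]) =
      insert (γ ++ [b]) ((strings N).filter (fun δ => δ <+: γ)) := by
  ext δ
  simp only [Finset.mem_filter, Finset.mem_insert, prefix_concat_iff]
  constructor
  · rintro ⟨hδ, rfl | hp⟩
    · exact Or.inl rfl
    · exact Or.inr ⟨hδ, hp⟩
  · rintro (rfl | ⟨hδ, hp⟩)
    · exact ⟨h, Or.inl rfl⟩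
    · exact ⟨hδ, Or.inr hp⟩

lemma treeI_concat {N : ℕ} (f : List Bool → ℝ) {γ : List Bool} {b : Bool}
    (h : γ ++ [b] ∈ strings N) :
    treeI N f (γ ++ [b]) = f (γ ++ [b]) + treeI N f γ := by
  unfold treeI
  rw [filter_prefix_concat h, Finset.sum_insert]
  intro hmem
  have := (Finset.mem_filter.1 hmem).2
  have := this.length_le
  simp at this

lemma treeI_nil {N : ℕ} (f : List Bool → ℝ) : treeI N f [] = f [] := by
  unfold treeI
  have : (strings N).filter (fun δ => δ <+: ([] : List Bool)) = {([] : List Bool)} := by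
    ext δ
    simp [List.prefix_nil, mem_strings]
    rintro rfl; exact Nat.zero_le N
  rw [this, Finset.sum_singleton]

lemma treeIstar_nil {N : ℕ} (ν : List Bool → ℝ) : treeIstar N ν [] = treeMass N ν := by
  unfold treeIstar treeMass
  rw [Finset.filter_true_of_mem (fun δ _ => List.nil_prefix)]

lemma treeI_mono {N : ℕ} {g : List Bool → ℝ} (hg : ∀ α, 0 ≤ g α) {α β : List Bool}
    (h : α <+: β) : treeI N g α ≤ treeI N g β := by
  apply Finset.sum_le_sum_of_subset_of_nonneg
  · intro δ hδ
    rw [Finset.mem_filter] at *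
    exact ⟨hδ.1, hδ.2.trans h⟩
  · exact fun i _ _ => hg i

lemma treeIstar_anti {N : ℕ} {ν : List Bool → ℝ} (hν : ∀ α, 0 ≤ ν α) {α β : List Bool}
    (h : α <+: β) : treeIstar N ν β ≤ treeIstar N ν α := by
  apply Finset.sum_le_sum_of_subset_of_nonneg
  · intro δ hδ
    rw [Finset.mem_filter] at *
    exact ⟨hδ.1, h.trans hδ.2⟩
  · exact fun i _ _ => hν i

lemma treeIstar_le_treeV {N : ℕ} {ν : List Bool → ℝ} (hν : ∀ α, 0 ≤ ν α) {α : List Bool}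
    (hα : α ∈ strings N) : treeIstar N ν α ≤ treeV N ν α := by
  apply Finset.single_le_sum (f := fun δ => treeIstar N ν δ)
  · exact fun i _ => treeIstar_nonneg hν i
  · exact Finset.mem_filter.2 ⟨hα, List.prefix_rfl⟩

/-- On the tree, if `x ≥ |ν|` then `𝕀(1_{V^ν ≤ x}·𝕀*ν) ≥ x/2` on the level set `{V^ν ≥ x}`. -/
theorem stmt15 (N : ℕ) (hN : 1 ≤ N) (ν : List Bool → ℝ)
    (hν : IsMeasureOnBoundary N ν) (x : ℝ) (hx : treeMass N ν ≤ x) :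
    ∀ β ∈ strings N, x ≤ treeV N ν β →
      x / 2 ≤ treeI N (fun α => if treeV N ν α ≤ x then treeIstar N ν α else 0) β := by
  obtain ⟨hν0, -⟩ := hν
  have hg0 : ∀ α, 0 ≤ treeIstar N ν α := treeIstar_nonneg hν0
  have hVroot : treeV N ν [] = treeMass N ν := by
    rw [treeV, treeI_nil, treeIstar_nil]
  -- S = the indicator-truncated function
  set F : List Bool → ℝ := fun α => if treeV N ν α ≤ x then treeIstar N ν α else 0 with hF
  have hF0 : ∀ α, 0 ≤ F α := by
    intro α; rw [hF]; dsimp only; split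
    · exact hg0 α
    · exact le_rfl
  -- if V γ ≤ x then S γ = V γ
  have hSeq : ∀ γ : List Bool, treeV N ν γ ≤ x → treeI N F γ = treeV N ν γ := by
    intro γ hγ
    unfold treeV
    unfold treeI
    apply Finset.sum_congr rfl
    intro δ hδ
    rw [Finset.mem_filter] at hδ
    have : treeV N ν δ ≤ treeV N ν γ := treeI_mono hg0 hδ.2
    rw [hF]; dsimp only
    rw [if_pos (this.trans hγ)]
  intro β
  induction β using List.reverseRecOn with
  | nil =>
    intro h0 hx'
    rw [hSeq [] (hVroot ▸ hx), hVroot]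
    have : treeMass N ν = x := le_antisymm hx (hVroot ▸ hx')
    have h0x : 0 ≤ x := this ▸ Finset.sum_nonneg fun i _ => hν0 i
    linarith
  | append_singleton γ b ih =>
    intro hβ hVβ
    have hγ : γ ∈ strings N := prefix_mem_strings hβ (List.prefix_append _ _)
    have hsplit : treeI N F (γ ++ [b]) = F (γ ++ [b]) + treeI N F γ := treeI_concat F hβ
    by_cases hc : treeV N ν γ ≤ x
    · -- key case
      have hVsplit : treeV N ν (γ ++ [b]) =
          treeIstar N ν (γ ++ [b]) + treeV N ν γ := treeI_concat _ hβ
      have h1 : treeIstar N ν (γ ++ [b]) ≤ treeIstar N ν γ :=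
        treeIstar_anti hν0 (List.prefix_append _ _)
      have h2 : treeIstar N ν γ ≤ treeV N ν γ := treeIstar_le_treeV hν0 hγ
      have hge : x / 2 ≤ treeV N ν γ := by linarith [hVsplit ▸ hVβ]
      have : treeI N F γ = treeV N ν γ := hSeq γ hc
      have := hF0 (γ ++ [b])
      linarith
    · have := ih hγ (le_of_not_ge hc)
      have := hF0 (γ ++ [b])
      linarith
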